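/- For every z in the open first quadrant with |z| > 1, 1 + (1+i)·F(z) = (2(1+i)/π)·Σ_{n=0}^∞ 1/((4n+1)·z^(4n+1)), where F(z) := (1/(2π))·(Log((1+z)/(1−z)) + i·Log((1+iz)/(1−iz))). -/

import Mathlib

/-!
With `w = z⁻¹` one has `(1 + z) / (1 - z) = -(1 + w) / (1 - w)`, and for `z` in the upper
half-plane outside the unit disc the principal logarithm of this is
`log (1 + w) - log (1 - w) + π i`, because `arg (1 + w) ∈ (-π/2, 0)` and
`arg (1 - w) ∈ [0, π/2)`; here `log (1 + w) - log (1 - w) = 2 ∑ w^(2k+1) / (2k+1)`.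
The same applies to `i z`, which lies in the upper half-plane as `Re z > 0`.
Since `(i z)^(2k+1) = (-1)^k i z^(2k+1)`, in the combination
`Log((1+z)/(1-z)) + i Log((1+iz)/(1-iz))` the terms with odd `k` cancel and those with even `k`
double, while the two constants `π i` account for the `1` on the left-hand side.
-/

open Complex

/-- `F(z) = (1/(2π))·(Log((1+z)/(1−z)) + i·Log((1+iz)/(1−iz)))`. -/
noncomputable def F (z : ℂ) : ℂ :=
  (1 / (2 * (Real.pi : ℂ))) *
    (Complex.log ((1 + z) / (1 - z)) + Complex.I * Complex.log ((1 + Complex.I * z) / (1 - Complex.I * z)))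

theorem hasSum_two_mul_iff_of_odd_eq_zero {M : Type*} [AddCommMonoid M] [TopologicalSpace M]
    {f : ℕ → M} {a : M} (hf : ∀ m, f (2 * m + 1) = 0) :
    HasSum (fun m => f (2 * m)) a ↔ HasSum f a := by
  refine (mul_right_injective₀ (two_ne_zero' ℕ)).hasSum_iff fun n hn => ?_
  obtain ⟨m, rfl | rfl⟩ := Nat.even_or_odd' n
  · exact absurd ⟨m, rfl⟩ hn
  · exact hf m

namespace Complex

theorem hasSum_log_sub_log_of_norm_lt_one {w : ℂ} (hw : ‖w‖ < 1) :
    HasSum (fun k : ℕ => 2 * (1 / (2 * k + 1)) * w ^ (2 * k + 1))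
      (log (1 + w) - log (1 - w)) := by
  have h := (hasSum_taylorSeries_neg_log' hw).sub
    (hasSum_taylorSeries_neg_log' (z := -w) (by rwa [norm_neg]))
  rw [← hasSum_two_mul_iff_of_odd_eq_zero fun m => ?_, sub_neg_eq_add 1 w, neg_sub_neg] at h
  · refine h.congr_fun fun k => ?_
    rw [Odd.neg_pow ⟨k, rfl⟩ w]
    push_cast
    ring
  · rw [Even.neg_pow ⟨m + 1, by ring⟩ w, sub_self]

theorem log_neg_one_add_div_one_sub {w : ℂ} (hw : ‖w‖ < 1) (him : w.im < 0) :
    log (-((1 + w) / (1 - w))) = log (1 + w) - log (1 - w) + Real.pi * I := by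
  have hre : |w.re| < 1 := (abs_re_le_norm w).trans_lt hw
  rw [abs_lt] at hre
  have hre₁ : 0 < (1 + w).re := by simp; linarith
  have hre₂ : 0 < (1 - w).re := by simp; linarith
  have h₁ : 1 + w ≠ 0 := fun h => by simp [h] at hre₁
  have h₂ : 1 - w ≠ 0 := fun h => by simp [h] at hre₂
  have hexp : exp (log (1 + w) - log (1 - w) + Real.pi * I) = -((1 + w) / (1 - w)) := by
    rw [exp_add, exp_sub, exp_log h₁, exp_log h₂, exp_pi_mul_I]
    ring
  have ha₁ : -(Real.pi / 2) < (1 + w).arg := neg_pi_div_two_lt_arg_iff.mpr (Or.inl hre₁)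
  have ha₂ : (1 + w).arg < 0 := arg_neg_iff.mpr (by simpa using him)
  have hb₁ : 0 ≤ (1 - w).arg := arg_nonneg_iff.mpr (by simp; linarith)
  have hb₂ : (1 - w).arg < Real.pi / 2 := arg_lt_pi_div_two_iff.mpr (Or.inl hre₂)
  have him' : (log (1 + w) - log (1 - w) + Real.pi * I).im =
      (1 + w).arg - (1 - w).arg + Real.pi := by
    simp [log_im]
  rw [← hexp, log_exp (by rw [him']; linarith) (by rw [him']; linarith)]

theorem hasSum_log_one_add_div_one_sub {z : ℂ} (hz : 1 < ‖z‖) (him : 0 < z.im) :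
    HasSum (fun k : ℕ => 2 * (1 / (2 * k + 1)) * (z ^ (2 * k + 1))⁻¹)
      (log ((1 + z) / (1 - z)) - Real.pi * I) := by
  have hz₀ : z ≠ 0 := norm_pos_iff.mp (one_pos.trans hz)
  have hw : ‖z⁻¹‖ < 1 := by rwa [norm_inv, inv_lt_one_iff₀, or_iff_right (by linarith)]
  have hwim : z⁻¹.im < 0 := by
    rw [inv_im]
    exact div_neg_of_neg_of_pos (neg_neg_iff_pos.mpr him) (normSq_pos.mpr hz₀)
  have hdiv : (1 + z) / (1 - z) = -((1 + z⁻¹) / (1 - z⁻¹)) := by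
    have h₁ : 1 - z ≠ 0 := fun h => by simp [← sub_eq_zero.mp h] at hz
    have h₂ : z - 1 ≠ 0 := by rwa [← neg_sub, neg_ne_zero]
    field_simp
    ring
  rw [hdiv, log_neg_one_add_div_one_sub hw hwim, add_sub_cancel_right]
  simpa only [inv_pow] using hasSum_log_sub_log_of_norm_lt_one hw

theorem I_mul_pow_two_mul_add_one (z : ℂ) (k : ℕ) :
    (I * z) ^ (2 * k + 1) = (-1) ^ k * I * z ^ (2 * k + 1) := by
  rw [mul_pow, pow_succ, pow_mul, I_sq]

theorem mul_inv_pow_add_I_mul_inv_I_mul_pow (c z : ℂ) (k : ℕ) :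
    c * (z ^ (2 * k + 1))⁻¹ + I * (c * ((I * z) ^ (2 * k + 1))⁻¹) =
      (1 + (-1) ^ k) * (c * (z ^ (2 * k + 1))⁻¹) := by
  rw [I_mul_pow_two_mul_add_one, mul_inv, mul_inv, inv_I, ← inv_pow (-1 : ℂ) k, inv_neg_one]
  linear_combination (-(-1) ^ k * (c * (z ^ (2 * k + 1))⁻¹)) * I_sq

end Complex

/-- For `z` in the open first quadrant with `|z| > 1`,
`1 + (1+i)·F(z) = (2(1+i)/π)·Σ_{n=0}^∞ 1/((4n+1)·z^(4n+1))`. -/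
theorem one_add_mul_F_hasSum (z : ℂ)
    (hre : 0 < z.re) (him : 0 < z.im) (hz : 1 < ‖z‖) :
    HasSum
      (fun n : ℕ => (2 * (1 + Complex.I) / (Real.pi : ℂ)) *
        (1 / (((4 * n + 1 : ℕ) : ℂ) * z ^ (4 * n + 1))))
      (1 + (1 + Complex.I) * F z) := by
  have hsum := (((hasSum_log_one_add_div_one_sub hz him).add
    ((hasSum_log_one_add_div_one_sub (z := I * z) (by simpa using hz) (by simpa using hre)).mul_left
      I)).mul_left ((1 + I) / (2 * Real.pi)))
  have hval : (1 + I) / (2 * Real.pi) * (log ((1 + z) / (1 - z)) - Real.pi * I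
      + I * (log ((1 + I * z) / (1 - I * z)) - Real.pi * I)) = 1 + (1 + I) * F z := by
    have hπ : (Real.pi : ℂ) ≠ 0 := ofReal_ne_zero.mpr Real.pi_ne_zero
    rw [F]
    field_simp
    linear_combination (-(I * Real.pi) - 2 * Real.pi) * I_sq
  simp only [mul_inv_pow_add_I_mul_inv_I_mul_pow] at hsum
  rw [hval, ← hasSum_two_mul_iff_of_odd_eq_zero fun m => by simp [pow_succ, pow_mul]] at hsum
  refine hsum.congr_fun fun m => ?_
  simp only [pow_mul, neg_one_sq, one_pow]
  push_cast
  field_simp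
  ring
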